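/- For every ε > 0 and every λ ∈ [0, 1/2 − ε], q_3(2,λ) − p_1(2,λ) ≥ ε/4. In fact, q_3(2, 1/2−ε) − p_1(2, 1/2−ε) = ε/4 + 3ε³. -/
import Mathlib


/-- The output distribution p(n,λ) of the general attenuator with Fock environment |n⟩,
for ℓ = 0, …, n+1 (the case ℓ = n+1 is the continuous extension of the formula
… · λ^(n-ℓ) · …, which involves λ⁻¹, valid for all λ ∈ (0,1)). -/
noncomputable def pdist (n ℓ : ℕ) (t : ℝ) : ℝ :=
  if ℓ ≤ n then
    1 / (2 * ((n : ℝ) + 1) * (1 - t)) * ((n + 1).choose ℓ : ℝ) * (1 - t) ^ ℓ * t ^ (n - ℓ) *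
      ((1 - t) * ((n : ℝ) - (ℓ : ℝ) + 1) + (((n : ℝ) + 1) * (1 - t) - (ℓ : ℝ)) ^ 2)
  else ((n : ℝ) + 1) * t * (1 - t) ^ n / 2

/-- The output distribution q(n,λ) (spectrum of the joint output state). -/
noncomputable def qdist (n ℓ : ℕ) (t : ℝ) : ℝ :=
  if ℓ ≤ n then
    1 / (2 * ((n : ℝ) + 1) * (1 - t)) * ((n + 1).choose ℓ : ℝ) * (1 - t) ^ ℓ * t ^ (n - ℓ) *
      (t * (ℓ : ℝ) + (((n : ℝ) + 1) * (1 - t) - (ℓ : ℝ)) ^ 2)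
  else (1 - t) ^ n * (1 + ((n : ℝ) + 1) * t) / 2

lemma key (t : ℝ) (ht : t ≠ 1) :
    qdist 2 3 t - pdist 2 1 t = (1 - 5*t + 9*t^2 - 6*t^3) / 2 := by
  have h1 : (1 : ℝ) - t ≠ 0 := by intro h; apply ht; linarith
  simp only [qdist, pdist, if_neg (by norm_num : ¬ (3:ℕ) ≤ 2), if_pos (by norm_num : (1:ℕ) ≤ 2)]
  norm_num
  field_simp
  ring

theorem qdist_top_minus_pdist_n_eq_two (ε : ℝ) (hε : 0 < ε) :
    (∀ t : ℝ, 0 ≤ t → t ≤ 1 / 2 - ε → ε / 4 ≤ qdist 2 3 t - pdist 2 1 t) ∧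
    qdist 2 3 (1 / 2 - ε) - pdist 2 1 (1 / 2 - ε) = ε / 4 + 3 * ε ^ 3 := by
  constructor
  · intro t ht0 ht1
    rw [key t (by nlinarith)]
    nlinarith [sq_nonneg (t - 1/2), sq_nonneg t, mul_nonneg hε.le (sq_nonneg (t - 1/2))]
  · rw [key _ (by nlinarith)]
    ring
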